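/- Let p : ℝ^{n+1} → ℝ be a homogeneous polynomial of degree d. Then the Laplace–Beltrami operator of the round unit sphere S^n applied to the restriction p|_{S^n} satisfies Δ_{S^n}(p|_{S^n}) = (Δ_{ℝ^{n+1}} p)|_{S^n} − d(d+n−1) · p|_{S^n}. -/

import Mathlib

noncomputable section

/-- The Euclidean Laplacian `Δf = ∑ᵢ ∂²f/∂xᵢ²` of `f : ℝ^{n+1} → ℝ`. -/
def euclideanLaplacian {n : ℕ} (f : EuclideanSpace ℝ (Fin (n + 1)) → ℝ)
    (x : EuclideanSpace ℝ (Fin (n + 1))) : ℝ :=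
  ∑ i : Fin (n + 1),
    fderiv ℝ (fun y => fderiv ℝ f y (EuclideanSpace.single i 1)) x
      (EuclideanSpace.single i 1)

/-- The Laplace–Beltrami operator of the round unit sphere `Sⁿ ⊂ ℝ^{n+1}`, computed via
the degree-zero homogeneous extension: `Δ_{Sⁿ} f (x) = Δ(y ↦ f(y/‖y‖))(x)` for `‖x‖ = 1`. -/
def sphereLaplacian {n : ℕ} (f : EuclideanSpace ℝ (Fin (n + 1)) → ℝ)
    (x : EuclideanSpace ℝ (Fin (n + 1))) : ℝ :=
  euclideanLaplacian (fun y => f (‖y‖⁻¹ • y)) x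

/-! The degree-zero extension `y ↦ p(y/‖y‖)` of `p|_{Sⁿ}` is `(‖y‖²)^(-d/2) p(y)` by homogeneity.
Functions `(‖y‖²)^e q(y)` with `q` a polynomial are closed under partial derivatives,
`∂ᵢ((‖y‖²)^e q) = (‖y‖²)^(e-1) (2e yᵢ q) + (‖y‖²)^e ∂ᵢq`, so the Laplacian can be computed
symbolically; with Euler's identity `∑ yᵢ ∂ᵢp = d p` it comes out as
`Δ((‖y‖²)^e p) = (‖y‖²)^e (Δp + 2e(2e+2d+n-1) ‖y‖⁻² p)`, and for `e = -d/2`, `‖y‖ = 1`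
the coefficient is `-d(d+n-1)`. -/

open MvPolynomial Topology

namespace MvPolynomial

theorem IsHomogeneous.eval_smul {σ R : Type*} [CommSemiring R] {φ : MvPolynomial σ R} {n : ℕ}
    (hφ : φ.IsHomogeneous n) (c : R) (x : σ → R) :
    eval (c • x) φ = c ^ n * eval x φ := by
  conv_lhs => rw [φ.as_sum]
  conv_rhs => rw [φ.as_sum]
  rw [map_sum, map_sum, Finset.mul_sum]
  refine Finset.sum_congr rfl fun m hm => ?_
  have hdeg : ∑ i ∈ m.support, m i = n := by
    rw [← hφ (mem_support_iff.mp hm), Finsupp.weight_apply, Finsupp.sum]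
    simp
  simp only [eval_monomial, Finsupp.prod, Pi.smul_apply, smul_eq_mul, mul_pow,
    Finset.prod_mul_distrib, Finset.prod_pow_eq_pow_sum, hdeg]
  ring

variable {σ : Type*} [Fintype σ]

theorem IsHomogeneous.sum_mul_eval_pderiv {p : MvPolynomial σ ℝ} {d : ℕ}
    (hp : p.IsHomogeneous d) (x : σ → ℝ) :
    ∑ i, x i * eval x (pderiv i p) = d * eval x p := by
  simpa [map_sum] using congrArg (eval x) hp.sum_X_mul_pderiv

theorem IsHomogeneous.eval_inv_norm_smul {p : MvPolynomial σ ℝ} {d : ℕ}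
    (hp : p.IsHomogeneous d) (y : EuclideanSpace ℝ σ) :
    eval (fun i => (‖y‖⁻¹ • y) i) p = (‖y‖ ^ 2) ^ (-(d / 2 : ℝ)) * eval (fun i => y i) p := by
  have hscale : (‖y‖ ^ 2) ^ (-(d / 2 : ℝ)) = ‖y‖⁻¹ ^ d := by
    rw [← Real.rpow_natCast ‖y‖ 2, ← Real.rpow_mul (norm_nonneg y), Nat.cast_ofNat,
      show 2 * -(d / 2 : ℝ) = -d by ring, Real.rpow_neg (norm_nonneg y), Real.rpow_natCast, inv_pow]
  rw [hscale, ← hp.eval_smul]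
  rfl

theorem hasFDerivAt_eval_euclidean (p : MvPolynomial σ ℝ) (y : EuclideanSpace ℝ σ) :
    HasFDerivAt (fun z : EuclideanSpace ℝ σ => eval (fun i => z i) p)
      (∑ i, eval (fun j => y j) (pderiv i p) • EuclideanSpace.proj (𝕜 := ℝ) i) y := by
  classical
  induction p using MvPolynomial.induction_on with
  | C a => simpa using hasFDerivAt_const a y
  | add p q hp hq =>
    simp only [map_add, add_smul, Finset.sum_add_distrib]
    exact hp.add hq
  | mul_X p i hp =>
    simp only [map_mul, eval_X]
    refine (hp.mul (EuclideanSpace.proj (𝕜 := ℝ) i).hasFDerivAt).congr_fderiv ?_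
    ext v
    simp [pderiv_X, Pi.single_apply, apply_ite (eval _), mul_add, Finset.sum_add_distrib,
      Finset.mul_sum, mul_comm, mul_left_comm]

theorem fderiv_eval_euclidean_single [DecidableEq σ] (p : MvPolynomial σ ℝ)
    (y : EuclideanSpace ℝ σ) (i : σ) :
    fderiv ℝ (fun z : EuclideanSpace ℝ σ => eval (fun i => z i) p) y (EuclideanSpace.single i 1) =
      eval (fun j => y j) (pderiv i p) := by
  simp [(hasFDerivAt_eval_euclidean p y).fderiv]

end MvPolynomial

section NormSqRpowMul

variable {σ : Type*} [Fintype σ]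

def normSqRpowMul (e : ℝ) (p : MvPolynomial σ ℝ) (y : EuclideanSpace ℝ σ) : ℝ :=
  (‖y‖ ^ 2) ^ e * eval (fun i => y i) p

theorem hasFDerivAt_normSqRpowMul (e : ℝ) (p : MvPolynomial σ ℝ) {y : EuclideanSpace ℝ σ}
    (hy : y ≠ 0) :
    HasFDerivAt (normSqRpowMul e p)
      ((‖y‖ ^ 2) ^ e • ∑ i, eval (fun j => y j) (pderiv i p) • EuclideanSpace.proj (𝕜 := ℝ) i +
        eval (fun j => y j) p • (e * (‖y‖ ^ 2) ^ (e - 1)) • (2 • innerSL ℝ y)) y :=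
  ((hasStrictFDerivAt_norm_sq y).hasFDerivAt.rpow_const (Or.inl (by simpa using hy))).mul
    (hasFDerivAt_eval_euclidean p y)

variable [DecidableEq σ]

theorem fderiv_normSqRpowMul_single (e : ℝ) (p : MvPolynomial σ ℝ) {y : EuclideanSpace ℝ σ}
    (hy : y ≠ 0) (i : σ) :
    fderiv ℝ (normSqRpowMul e p) y (EuclideanSpace.single i 1) =
      normSqRpowMul (e - 1) (C (2 * e) * X i * p) y + normSqRpowMul e (pderiv i p) y := by
  simp [(hasFDerivAt_normSqRpowMul e p hy).fderiv, EuclideanSpace.inner_single_right,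
    normSqRpowMul]
  ring

theorem fderiv_fderiv_normSqRpowMul_single (e : ℝ) (p : MvPolynomial σ ℝ)
    {x : EuclideanSpace ℝ σ} (hx : x ≠ 0) (i : σ) :
    fderiv ℝ (fun y => fderiv ℝ (normSqRpowMul e p) y (EuclideanSpace.single i 1)) x
        (EuclideanSpace.single i 1) =
      normSqRpowMul (e - 1 - 1) (C (2 * (e - 1)) * X i * (C (2 * e) * X i * p)) x +
        normSqRpowMul (e - 1) (pderiv i (C (2 * e) * X i * p)) x +
      (normSqRpowMul (e - 1) (C (2 * e) * X i * pderiv i p) x +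
        normSqRpowMul e (pderiv i (pderiv i p)) x) := by
  have hpartial : (fun y => fderiv ℝ (normSqRpowMul e p) y (EuclideanSpace.single i 1)) =ᶠ[𝓝 x]
      normSqRpowMul (e - 1) (C (2 * e) * X i * p) + normSqRpowMul e (pderiv i p) := by
    filter_upwards [isOpen_ne.mem_nhds hx] with y hy
    exact fderiv_normSqRpowMul_single e p hy i
  rw [hpartial.fderiv_eq, fderiv_add (hasFDerivAt_normSqRpowMul _ _ hx).differentiableAt
    (hasFDerivAt_normSqRpowMul _ _ hx).differentiableAt, add_apply,
    fderiv_normSqRpowMul_single _ _ hx, fderiv_normSqRpowMul_single _ _ hx]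

end NormSqRpowMul

theorem euclideanLaplacian_eval {n : ℕ} (p : MvPolynomial (Fin (n + 1)) ℝ)
    (x : EuclideanSpace ℝ (Fin (n + 1))) :
    euclideanLaplacian (fun y => eval (fun i => y i) p) x =
      eval (fun i => x i) (∑ i, pderiv i (pderiv i p)) := by
  simp only [euclideanLaplacian, fderiv_eval_euclidean_single, map_sum]

theorem euclideanLaplacian_normSqRpowMul {n d : ℕ} (e : ℝ) {p : MvPolynomial (Fin (n + 1)) ℝ}
    (hp : p.IsHomogeneous d) {x : EuclideanSpace ℝ (Fin (n + 1))} (hx : x ≠ 0) :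
    euclideanLaplacian (normSqRpowMul e p) x =
      (‖x‖ ^ 2) ^ e * (eval (fun i => x i) (∑ i, pderiv i (pderiv i p)) +
        2 * e * (2 * e + 2 * d + n - 1) / ‖x‖ ^ 2 * eval (fun i => x i) p) := by
  have hs : ‖x‖ ^ 2 ≠ 0 := by positivity
  have hterm : ∀ i, fderiv ℝ (fun y => fderiv ℝ (normSqRpowMul e p) y
      (EuclideanSpace.single i 1)) x (EuclideanSpace.single i 1) =
      (‖x‖ ^ 2) ^ e * (eval (fun i => x i) (pderiv i (pderiv i p)) +
        4 * e * (e - 1) / (‖x‖ ^ 2) ^ 2 * eval (fun i => x i) p * x i ^ 2 +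
        2 * e / ‖x‖ ^ 2 * eval (fun i => x i) p +
        4 * e / ‖x‖ ^ 2 * (x i * eval (fun i => x i) (pderiv i p))) := by
    intro i
    rw [fderiv_fderiv_normSqRpowMul_single e p hx]
    simp [normSqRpowMul, Real.rpow_sub_one hs]
    field_simp
    ring
  simp only [euclideanLaplacian, hterm, ← Finset.mul_sum, Finset.sum_add_distrib, map_sum,
    hp.sum_mul_eval_pderiv, ← EuclideanSpace.real_norm_sq_eq, Finset.sum_const,
    Finset.card_univ, Fintype.card_fin, nsmul_eq_mul]
  field_simp
  push_cast
  ring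

/-- for a homogeneous polynomial `p` of degree `d` on `ℝ^{n+1}`,
`Δ_{Sⁿ}(p|_{Sⁿ}) = (Δ_{ℝ^{n+1}} p)|_{Sⁿ} − d(d+n−1) p|_{Sⁿ}`. -/
theorem stmt_7 (n d : ℕ) (p : MvPolynomial (Fin (n + 1)) ℝ)
    (hp : p.IsHomogeneous d) (x : EuclideanSpace ℝ (Fin (n + 1))) (hx : ‖x‖ = 1) :
    sphereLaplacian (fun y => MvPolynomial.eval (fun i => y i) p) x =
      euclideanLaplacian (fun y => MvPolynomial.eval (fun i => y i) p) x -
        (d : ℝ) * (d + n - 1) * MvPolynomial.eval (fun i => x i) p := by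
  have hx0 : x ≠ 0 := by
    rintro rfl
    simp at hx
  have hradial : (fun y => eval (fun i => (‖y‖⁻¹ • y) i) p) = normSqRpowMul (-(d / 2)) p :=
    funext hp.eval_inv_norm_smul
  rw [sphereLaplacian, hradial, euclideanLaplacian_normSqRpowMul _ hp hx0,
    euclideanLaplacian_eval, hx, one_pow, Real.one_rpow]
  ring
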